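/- Let k ≥ 3, b_k = 2^{k-1} - a_{k-2} + 1, and 0 ≤ u ≤ 2^{k-1} - b_k. Then M(b_k + u) = M(2^{k-1} - (a_{k-1} + u)) and M(2^k - (b_k + u)) = M(2^{k-1} - (a_{k-1} + u)), where M(n) is the number of optimal BSD representations of n of length equal to its NAF-bitlength. -/

import Mathlib

/-!
Let `optWeight n` be the least Hamming weight of a BSD representation of `n` of any length. It
obeys `optWeight (2 n) = optWeight n` and `optWeight (2 n + 1) = 1 + min (optWeight n)
(optWeight (n + 1))`, the NAF attains it, and `optWeight (2 ^ m ± v) = optWeight v + 1` whenever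
`3 |v| < 2 ^ m`. With `m = k - 2` and `v = a_m - 1 - u` the three numbers of the theorem are
`2 ^ m + v`, `2 ^ (m + 1) - v` and `2 ^ (m + 1) + v`; their NAFs are those of `±v` behind a
leading `1`, so each has optimal weight `optWeight v + 1`. In an optimal representation of
`2 ^ m + v` the top digit must be `1`; in one of `2 ^ (m + 1) ± v` the top digit must be `1` and
the next one `0`: a top digit `-1` cannot reach the value, and any other choice leaves a
representation of `2 ^ m ± v` or of `±v ∓ 2 ^ m` lighter than its optimal weight. Stripping
these digits matches all three sets of optimal representations with the optimal `m`-digit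
representations of `v` or of `-v`, and negation matches those two.
-/

open Polynomial in
/-- The Stern polynomial: `B 0 = 0`, `B 1 = 1`, `B (2n) = t * B n`, `B (2n+1) = B n + B (n+1)`. -/
noncomputable def sternP : ℕ → Polynomial ℕ
  | 0 => 0
  | 1 => 1
  | n + 2 =>
    if (n + 2) % 2 = 0 then X * sternP (n / 2 + 1)
    else sternP (n / 2 + 1) + sternP (n / 2 + 2)
decreasing_by all_goals omega

/-- The digits of a BSD representation lie in {-1, 0, 1}. -/
def IsBSDDigits {i : ℕ} (b : Fin i → ℤ) : Prop := ∀ j, b j ∈ ({-1, 0, 1} : Set ℤ)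

/-- The value represented by the digit string `b` (least significant digit `b 0`). -/
def bsdVal {i : ℕ} (b : Fin i → ℤ) : ℤ := ∑ j : Fin i, b j * 2 ^ (j : ℕ)

/-- `b` is a (not necessarily reduced) non-adjacent form digit string of length `k`:
digits in {-1,0,1}, no two adjacent digits both nonzero, and nonzero leading digit
(when `k > 0`). -/
def IsReducedNAF {k : ℕ} (b : Fin k → ℤ) : Prop :=
  IsBSDDigits b ∧
  (∀ j : Fin k, ∀ h : (j : ℕ) + 1 < k, b j = 0 ∨ b ⟨(j : ℕ) + 1, h⟩ = 0) ∧
  (∀ h : 0 < k, b ⟨k - 1, Nat.sub_lt h one_pos⟩ ≠ 0)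

/-- `m` has a reduced NAF representation of bitlength `k`. -/
def HasNAFLen (m : ℤ) (k : ℕ) : Prop :=
  ∃ b : Fin k → ℤ, IsReducedNAF b ∧ bsdVal b = m

/-- `I k`: the set of positive integers of NAF-bitlength `k`. -/
def NAFInterval (k : ℕ) : Set ℕ := {n : ℕ | HasNAFLen (n : ℤ) k}

/-- `a k = min I k`: `a 1 = 1`, `a 2 = 2`, `a k = 2^(k-2) + a (k-2)`. -/
def aseq : ℕ → ℕ
  | 0 => 0
  | 1 => 1
  | 2 => 2
  | k + 3 => 2 ^ (k + 1) + aseq (k + 1)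

/-- The NAF-bitlength of `n`. -/
noncomputable def nafLen (n : ℕ) : ℕ := sInf {k : ℕ | HasNAFLen (n : ℤ) k}

/-- The minimal Hamming weight of a BSD representation of `n` of length
equal to its NAF-bitlength. -/
noncomputable def minWeight (n : ℕ) : ℕ :=
  sInf {w : ℕ | ∃ b : Fin (nafLen n) → ℤ,
    IsBSDDigits b ∧ bsdVal b = (n : ℤ) ∧ {j | b j ≠ 0}.ncard = w}

/-- `Z n`: the number of zeros in an optimal (minimal-weight) BSD representation of `n`
of length equal to its NAF-bitlength. -/
noncomputable def Zfun (n : ℕ) : ℕ := nafLen n - minWeight n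

/-- `M n`: the number of optimal (minimal-weight) BSD representations of `n`
of length equal to its NAF-bitlength. -/
noncomputable def Mfun (n : ℕ) : ℕ :=
  {b : Fin (nafLen n) → ℤ |
    IsBSDDigits b ∧ bsdVal b = (n : ℤ) ∧ {j | b j ≠ 0}.ncard = minWeight n}.ncard

def bsdWeight {k : ℕ} (b : Fin k → ℤ) : ℕ := ∑ j, if b j = 0 then 0 else 1

section DigitStrings

variable {m : ℕ}

lemma ncard_ne_zero_eq_bsdWeight (b : Fin m → ℤ) : {j | b j ≠ 0}.ncard = bsdWeight b := by
  rw [← Finset.coe_filter_univ, Set.ncard_coe_finset, Finset.card_filter, bsdWeight]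
  simp only [ne_eq, ite_not]

lemma IsBSDDigits.eq_neg_one_or_eq_zero_or_eq_one {b : Fin m → ℤ} (hb : IsBSDDigits b)
    (j : Fin m) : b j = -1 ∨ b j = 0 ∨ b j = 1 := by
  simpa using hb j

lemma IsBSDDigits.natAbs_le_one {b : Fin m → ℤ} (hb : IsBSDDigits b) (j : Fin m) :
    (b j).natAbs ≤ 1 := by
  rcases hb.eq_neg_one_or_eq_zero_or_eq_one j with h | h | h <;> simp [h]

lemma isBSDDigits_cons {d : ℤ} {b : Fin m → ℤ} (hd : d.natAbs ≤ 1) (hb : IsBSDDigits b) :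
    IsBSDDigits (Fin.cons d b : Fin (m + 1) → ℤ) := by
  refine Fin.cases ?_ (fun j => ?_)
  · simp only [Fin.cons_zero, Set.mem_insert_iff, Set.mem_singleton_iff]; omega
  · simpa using hb j

lemma isBSDDigits_snoc {d : ℤ} {b : Fin m → ℤ} (hd : d.natAbs ≤ 1) (hb : IsBSDDigits b) :
    IsBSDDigits (Fin.snoc b d : Fin (m + 1) → ℤ) := by
  refine Fin.lastCases ?_ (fun j => ?_)
  · simp only [Fin.snoc_last, Set.mem_insert_iff, Set.mem_singleton_iff]; omega
  · simpa using hb j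

lemma IsBSDDigits.tail {b : Fin (m + 1) → ℤ} (hb : IsBSDDigits b) : IsBSDDigits (Fin.tail b) :=
  fun _ => hb _

lemma IsBSDDigits.init {b : Fin (m + 1) → ℤ} (hb : IsBSDDigits b) : IsBSDDigits (Fin.init b) :=
  fun _ => hb _

lemma IsBSDDigits.neg {b : Fin m → ℤ} (hb : IsBSDDigits b) : IsBSDDigits (-b) := by
  intro j
  rcases hb j with h | h | h <;> simp_all

lemma bsdVal_cons (d : ℤ) (b : Fin m → ℤ) :
    bsdVal (Fin.cons d b : Fin (m + 1) → ℤ) = d + 2 * bsdVal b := by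
  simp only [bsdVal, Fin.sum_univ_succ, Fin.cons_zero, Fin.cons_succ, Fin.val_zero, pow_zero,
    mul_one, Fin.val_succ, pow_succ, Finset.mul_sum]
  congr 1
  exact Finset.sum_congr rfl fun _ _ => by ring

lemma bsdVal_snoc (b : Fin m → ℤ) (d : ℤ) :
    bsdVal (Fin.snoc b d : Fin (m + 1) → ℤ) = bsdVal b + d * 2 ^ m := by
  simp [bsdVal, Fin.sum_univ_castSucc]

lemma bsdVal_eq_head_add_tail (b : Fin (m + 1) → ℤ) :
    bsdVal b = b 0 + 2 * bsdVal (Fin.tail b) := by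
  rw [← bsdVal_cons, Fin.cons_self_tail]

lemma bsdVal_eq_init_add_last (b : Fin (m + 1) → ℤ) :
    bsdVal b = bsdVal (Fin.init b) + b (Fin.last m) * 2 ^ m := by
  rw [← bsdVal_snoc, Fin.snoc_init_self]

lemma bsdVal_neg (b : Fin m → ℤ) : bsdVal (-b) = -bsdVal b := by
  simp [bsdVal, Finset.sum_neg_distrib]

lemma bsdWeight_cons (d : ℤ) (b : Fin m → ℤ) :
    bsdWeight (Fin.cons d b : Fin (m + 1) → ℤ) = (if d = 0 then 0 else 1) + bsdWeight b := by
  simp [bsdWeight, Fin.sum_univ_succ]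

lemma bsdWeight_snoc (b : Fin m → ℤ) (d : ℤ) :
    bsdWeight (Fin.snoc b d : Fin (m + 1) → ℤ) = bsdWeight b + (if d = 0 then 0 else 1) := by
  simp [bsdWeight, Fin.sum_univ_castSucc]

lemma bsdWeight_eq_head_add_tail (b : Fin (m + 1) → ℤ) :
    bsdWeight b = (if b 0 = 0 then 0 else 1) + bsdWeight (Fin.tail b) := by
  rw [← bsdWeight_cons, Fin.cons_self_tail]

lemma bsdWeight_eq_init_add_last (b : Fin (m + 1) → ℤ) :
    bsdWeight b = bsdWeight (Fin.init b) + (if b (Fin.last m) = 0 then 0 else 1) := by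
  rw [← bsdWeight_snoc, Fin.snoc_init_self]

lemma bsdWeight_neg (b : Fin m → ℤ) : bsdWeight (-b) = bsdWeight b := by
  simp [bsdWeight]

lemma abs_bsdVal_le {b : Fin m → ℤ} (hb : IsBSDDigits b) : |bsdVal b| ≤ 2 ^ m - 1 := by
  induction m with
  | zero => simp [bsdVal]
  | succ m ih =>
    have hinit := abs_le.mp (ih hb.init)
    rw [bsdVal_eq_init_add_last, abs_le, pow_succ]
    obtain h | h | h := hb.eq_neg_one_or_eq_zero_or_eq_one (Fin.last m)
    all_goals rw [h]; constructor <;> linarith [hinit.1, hinit.2]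

end DigitStrings

def HasBSDRep (m : ℕ) (n : ℤ) (w : ℕ) : Prop :=
  ∃ b : Fin m → ℤ, IsBSDDigits b ∧ bsdVal b = n ∧ bsdWeight b = w

noncomputable def optWeight (n : ℤ) : ℕ := sInf {w | ∃ m, HasBSDRep m n w}

lemma hasBSDRep_cons {m : ℕ} {n : ℤ} {w : ℕ} {d : ℤ} (hd : d.natAbs ≤ 1)
    (h : HasBSDRep m n w) :
    HasBSDRep (m + 1) (d + 2 * n) ((if d = 0 then 0 else 1) + w) := by
  obtain ⟨b, hb, rfl, rfl⟩ := h
  exact ⟨Fin.cons d b, isBSDDigits_cons hd hb, bsdVal_cons d b, bsdWeight_cons d b⟩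

lemma HasBSDRep.neg {m : ℕ} {n : ℤ} {w : ℕ} (h : HasBSDRep m n w) : HasBSDRep m (-n) w := by
  obtain ⟨b, hb, rfl, rfl⟩ := h
  exact ⟨-b, hb.neg, bsdVal_neg b, bsdWeight_neg b⟩

lemma exists_hasBSDRep (n : ℤ) : ∃ m w, HasBSDRep m n w := by
  suffices hnat : ∀ n : ℕ, ∃ m w, HasBSDRep m n w by
    obtain ⟨m, w, h⟩ := hnat n.natAbs
    rcases Int.natAbs_eq n with hn | hn
    · exact ⟨m, w, hn ▸ h⟩
    · exact ⟨m, w, hn ▸ h.neg⟩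
  intro n
  induction n using Nat.strong_induction_on with
  | _ n ih =>
    rcases Nat.eq_zero_or_pos n with rfl | hn
    · exact ⟨0, 0, ![], fun j => j.elim0, by simp [bsdVal], by simp [bsdWeight]⟩
    obtain ⟨m, w, h⟩ := ih (n / 2) (by omega)
    have h' := hasBSDRep_cons (d := (n % 2 : ℕ)) (by omega) h
    rw [show ((n % 2 : ℕ) : ℤ) + 2 * ((n / 2 : ℕ) : ℤ) = n by omega] at h'
    exact ⟨_, _, h'⟩

lemma optWeight_le {m : ℕ} {n : ℤ} {w : ℕ} (h : HasBSDRep m n w) : optWeight n ≤ w :=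
  Nat.sInf_le ⟨m, h⟩

lemma exists_hasBSDRep_optWeight (n : ℤ) : ∃ m, HasBSDRep m n (optWeight n) := by
  obtain ⟨m, w, h⟩ := exists_hasBSDRep n
  exact Nat.sInf_mem (s := {w | ∃ m, HasBSDRep m n w}) ⟨w, m, h⟩

lemma optWeight_zero : optWeight 0 = 0 :=
  Nat.eq_zero_of_le_zero <|
    optWeight_le ⟨![], fun j => j.elim0, by simp [bsdVal], by simp [bsdWeight]⟩

lemma optWeight_neg (n : ℤ) : optWeight (-n) = optWeight n := by
  apply le_antisymm
  · obtain ⟨m, h⟩ := exists_hasBSDRep_optWeight n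
    exact optWeight_le h.neg
  · obtain ⟨m, h⟩ := exists_hasBSDRep_optWeight (-n)
    simpa using optWeight_le h.neg

lemma optWeight_cons_le {d : ℤ} (hd : d.natAbs ≤ 1) (n : ℤ) :
    optWeight (d + 2 * n) ≤ (if d = 0 then 0 else 1) + optWeight n := by
  obtain ⟨m, h⟩ := exists_hasBSDRep_optWeight n
  exact optWeight_le (hasBSDRep_cons hd h)

lemma exists_optWeight_eq_cons {n : ℤ} (hn : n ≠ 0) :
    ∃ d n', d.natAbs ≤ 1 ∧ n = d + 2 * n' ∧
      optWeight n = (if d = 0 then 0 else 1) + optWeight n' := by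
  obtain ⟨m, b, hb, hval, hw⟩ := exists_hasBSDRep_optWeight n
  cases m with
  | zero => exact absurd (by simp [← hval, bsdVal]) hn
  | succ m =>
    have hn' : n = b 0 + 2 * bsdVal (Fin.tail b) := hval ▸ bsdVal_eq_head_add_tail b
    refine ⟨b 0, _, hb.natAbs_le_one 0, hn',
      le_antisymm (hn' ▸ optWeight_cons_le (hb.natAbs_le_one 0) _) ?_⟩
    rw [← hw, bsdWeight_eq_head_add_tail]
    exact Nat.add_le_add_left (optWeight_le ⟨_, hb.tail, rfl, rfl⟩) _

lemma optWeight_two_mul (n : ℤ) : optWeight (2 * n) = optWeight n := by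
  refine le_antisymm (by simpa using optWeight_cons_le (d := 0) (by simp) n) ?_
  rcases eq_or_ne n 0 with rfl | hn
  · simp
  obtain ⟨d, n', hd, heq, hw⟩ := exists_optWeight_eq_cons (mul_ne_zero two_ne_zero hn)
  obtain rfl : d = 0 := by omega
  obtain rfl : n' = n := by omega
  simp [hw]

lemma optWeight_two_mul_add_one (n : ℤ) :
    optWeight (2 * n + 1) = 1 + min (optWeight n) (optWeight (n + 1)) := by
  apply le_antisymm
  · have h₁ := optWeight_cons_le (d := 1) (by simp) n
    have h₂ := optWeight_cons_le (d := -1) (by simp) (n + 1)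
    rw [add_comm] at h₁
    rw [show -1 + 2 * (n + 1) = 2 * n + 1 by ring] at h₂
    simp only [one_ne_zero, neg_eq_zero, if_false] at h₁ h₂
    omega
  · obtain ⟨d, n', hd, heq, hw⟩ := exists_optWeight_eq_cons (n := 2 * n + 1) (by omega)
    obtain ⟨rfl, rfl⟩ | ⟨rfl, rfl⟩ : d = 1 ∧ n' = n ∨ d = -1 ∧ n' = n + 1 := by omega
    all_goals simp only [hw, one_ne_zero, neg_eq_zero, if_false]; omega

lemma optWeight_one : optWeight 1 = 1 := by
  simpa [optWeight_zero] using optWeight_two_mul_add_one 0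

lemma natAbs_optWeight_succ_sub_le_one (n : ℤ) :
    ((optWeight (n + 1) : ℤ) - optWeight n).natAbs ≤ 1 := by
  induction hN : n.natAbs using Nat.strong_induction_on generalizing n with
  | _ N ih =>
    have h0 := optWeight_zero
    have h1 := optWeight_one
    have hm1 : optWeight (-1) = 1 := by rw [optWeight_neg, h1]
    rcases Int.even_or_odd' n with ⟨t, rfl | rfl⟩
    · rcases eq_or_ne t 0 with rfl | ht
      · simp [h0, h1]
      have := ih _ (by omega) t rfl
      rw [optWeight_two_mul, optWeight_two_mul_add_one]
      omega
    · rcases eq_or_ne t (-1) with rfl | ht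
      · norm_num [h0, hm1]
      have := ih _ (by omega) t rfl
      rw [show 2 * t + 1 + 1 = 2 * (t + 1) by ring, optWeight_two_mul, optWeight_two_mul_add_one]
      omega

lemma optWeight_natAbs (x : ℤ) : optWeight x.natAbs = optWeight x := by
  rw [Int.natCast_natAbs]
  rcases abs_choice x with h | h <;> rw [h]
  exact optWeight_neg x

lemma optWeight_four_mul_add_one (s : ℤ) : optWeight (4 * s + 1) = optWeight s + 1 := by
  have := natAbs_optWeight_succ_sub_le_one s
  rw [show 4 * s + 1 = 2 * (2 * s) + 1 by ring, optWeight_two_mul_add_one, optWeight_two_mul,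
    optWeight_two_mul_add_one]
  omega

lemma optWeight_four_mul_add_three (s : ℤ) : optWeight (4 * s + 3) = optWeight (s + 1) + 1 := by
  have := natAbs_optWeight_succ_sub_le_one s
  rw [show 4 * s + 3 = 2 * (2 * s + 1) + 1 by ring, optWeight_two_mul_add_one,
    show 2 * s + 1 + 1 = 2 * (s + 1) by ring, optWeight_two_mul, optWeight_two_mul_add_one]
  omega

lemma optWeight_two_pow_add (m : ℕ) (v : ℤ) (hv : 3 * v.natAbs < 2 ^ m) :
    optWeight (2 ^ m + v) = optWeight v + 1 := by
  induction m generalizing v with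
  | zero =>
    obtain rfl : v = 0 := by rw [pow_zero] at hv; omega
    simp [optWeight_one, optWeight_zero]
  | succ m ih =>
    have hcast : ((2 ^ m : ℕ) : ℤ) = 2 ^ m := by norm_cast
    have hndvd : ¬ 3 ∣ 2 ^ m := fun h => absurd (Nat.prime_three.dvd_of_dvd_pow h) (by norm_num)
    rcases Int.even_or_odd' v with ⟨u, rfl | rfl⟩
    · rw [show (2 : ℤ) ^ (m + 1) + 2 * u = 2 * (2 ^ m + u) by ring, optWeight_two_mul,
        optWeight_two_mul, ih u (by omega)]
    · -- If `u` or `u + 1` leaves the range of the induction hypothesis, then `2 ^ m + u` is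
      -- `-(2 u + 1)` or `2 ^ m + u + 1` is `2 (2 u + 1) + 1`, whose weights are known from `u`.
      have hu : optWeight (2 ^ m + u) = optWeight u + 1 ∨ 2 ^ m + u = -(2 * u + 1) := by
        by_cases h : 3 * u.natAbs < 2 ^ m
        · exact Or.inl (ih u h)
        · right; omega
      have hu₁ : optWeight (2 ^ m + u + 1) = optWeight (u + 1) + 1 ∨
          2 ^ m + u + 1 = 2 * (2 * u + 1) + 1 := by
        by_cases h : 3 * (u + 1).natAbs < 2 ^ m
        · exact Or.inl (add_assoc (2 ^ m : ℤ) u 1 ▸ ih (u + 1) h)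
        · right; omega
      have e₁ := optWeight_two_mul_add_one u
      have e₂ := optWeight_two_mul_add_one (2 * u + 1)
      have e₃ : optWeight (2 * u + 1 + 1) = optWeight (u + 1) := by
        rw [show 2 * u + 1 + 1 = 2 * (u + 1) by ring, optWeight_two_mul]
      have e₄ := optWeight_neg (2 * u + 1)
      rw [show (2 : ℤ) ^ (m + 1) + (2 * u + 1) = 2 * (2 ^ m + u) + 1 by ring,
        optWeight_two_mul_add_one]
      rcases hu with hu | hu <;> rcases hu₁ with hu₁ | hu₁
      · omega
      · have := congrArg optWeight hu₁; omega
      · have := congrArg optWeight hu; omega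
      · omega

lemma optWeight_sub_two_pow (m : ℕ) (v : ℤ) (hv : 3 * v.natAbs < 2 ^ m) :
    optWeight (v - 2 ^ m) = optWeight v + 1 := by
  rw [← optWeight_neg, neg_sub, sub_eq_add_neg, optWeight_two_pow_add m (-v) (by simpa using hv),
    optWeight_neg]

lemma three_mul_aseq {t : ℕ} (ht : 1 ≤ t) : 3 * aseq t + t % 2 = 2 ^ t + 2 := by
  induction t using Nat.strong_induction_on with
  | _ t ih =>
    match t, ht with
    | 1, _ => rfl
    | 2, _ => rfl
    | s + 3, _ =>
      have := ih (s + 1) (by omega) (by omega)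
      rw [show aseq (s + 3) = 2 ^ (s + 1) + aseq (s + 1) from rfl, pow_add 2 (s + 1) 2] at *
      omega

lemma aseq_add_aseq_succ {t : ℕ} (ht : 1 ≤ t) : aseq t + aseq (t + 1) = 2 ^ t + 1 := by
  have := three_mul_aseq ht
  have := three_mul_aseq (t := t + 1) (by omega)
  rw [pow_succ] at this
  omega

lemma aseq_strictMono : StrictMono aseq := by
  refine strictMono_nat_of_lt_succ fun t => ?_
  rcases Nat.eq_zero_or_pos t with rfl | ht
  · decide
  have := aseq_add_aseq_succ ht
  have := three_mul_aseq ht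
  have := Nat.one_lt_two_pow_iff.mpr ht.ne'
  omega

lemma three_mul_lt_two_pow_of_lt_aseq {v m : ℕ} (hv : v < aseq m) : 3 * v < 2 ^ m := by
  obtain _ | m := m
  · exact absurd hv (Nat.not_lt_zero v)
  have := three_mul_aseq (t := m + 1) (by omega)
  omega

def NonAdj {k : ℕ} (b : Fin k → ℤ) : Prop :=
  ∀ j : Fin k, ∀ h : (j : ℕ) + 1 < k, b j = 0 ∨ b ⟨(j : ℕ) + 1, h⟩ = 0

section NonAdjacentForms

variable {m : ℕ}

lemma IsReducedNAF.nonAdj {b : Fin m → ℤ} (hb : IsReducedNAF b) : NonAdj b := hb.2.1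

lemma NonAdj.init {b : Fin (m + 1) → ℤ} (hb : NonAdj b) : NonAdj (Fin.init b) :=
  fun j h => hb j.castSucc (by simp only [Fin.val_castSucc]; omega)

lemma NonAdj.neg {b : Fin m → ℤ} (hb : NonAdj b) : NonAdj (-b) := by
  intro j h
  simpa using hb j h

lemma snoc_apply_mk (c : Fin m → ℤ) (d : ℤ) {i : ℕ} (hi : i < m + 1) :
    (Fin.snoc c d : Fin (m + 1) → ℤ) ⟨i, hi⟩ = if h : i < m then c ⟨i, h⟩ else d := by
  simp [Fin.snoc]

lemma NonAdj.snoc {c : Fin m → ℤ} {d : ℤ} (hc : NonAdj c)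
    (h : d = 0 ∨ ∀ hm : 0 < m, c ⟨m - 1, by omega⟩ = 0) :
    NonAdj (Fin.snoc c d : Fin (m + 1) → ℤ) := by
  rintro ⟨j, hj⟩ hj₁
  simp only [snoc_apply_mk] at hj₁ ⊢
  split_ifs with h₁ h₂
  · exact hc ⟨j, h₁⟩ h₂
  · obtain rfl : j = m - 1 := by omega
    exact h.symm.imp (· (by omega)) id
  · omega
  · omega

/-- A nonzero top digit forces the next one to vanish. -/
lemma NonAdj.bsdVal_eq {s : ℕ} {b : Fin (s + 2) → ℤ} (hb : NonAdj b)
    (htop : b (Fin.last (s + 1)) ≠ 0) :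
    bsdVal b = bsdVal (Fin.init (Fin.init b)) + b (Fin.last (s + 1)) * 2 ^ (s + 1) := by
  have h : Fin.init b (Fin.last s) = 0 := (hb ⟨s, by omega⟩ (by simp)).resolve_right htop
  rw [bsdVal_eq_init_add_last b, bsdVal_eq_init_add_last (Fin.init b), h]
  ring

lemma NonAdj.abs_bsdVal_lt {b : Fin m → ℤ} (hb : IsBSDDigits b) (hna : NonAdj b) :
    |bsdVal b| < aseq (m + 1) := by
  induction m using Nat.strong_induction_on with
  | _ m ih =>
    match m, b, hb, hna with
    | 0, b, _, _ => simp [bsdVal, aseq]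
    | 1, b, hb, _ =>
      have := hb.natAbs_le_one 0
      rw [show bsdVal b = b 0 by simp [bsdVal], abs_lt, show aseq 2 = 2 from rfl]
      omega
    | s + 2, b, hb, hna =>
      replace hna : NonAdj b := hna
      have hmono : aseq (s + 2) < aseq (s + 3) := aseq_strictMono (by omega)
      by_cases htop : b (Fin.last (s + 1)) = 0
      · rw [bsdVal_eq_init_add_last, htop, zero_mul, add_zero]
        exact (ih (s + 1) (by omega) hb.init hna.init).trans (by exact_mod_cast hmono)
      · have hr := abs_lt.mp (ih s (by omega) hb.init.init hna.init.init)
        have hpos : (0 : ℤ) < 2 ^ (s + 1) := by positivity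
        rw [hna.bsdVal_eq htop, show aseq (s + 2 + 1) = 2 ^ (s + 1) + aseq (s + 1) from rfl,
          abs_lt]
        push_cast
        obtain h | h : b (Fin.last (s + 1)) = -1 ∨ b (Fin.last (s + 1)) = 1 := by
          have := hb.natAbs_le_one (Fin.last (s + 1)); omega
        all_goals rw [h]; constructor <;> linarith [hr.1, hr.2]

lemma IsReducedNAF.aseq_le_abs_bsdVal {b : Fin m → ℤ} (hb : IsReducedNAF b) :
    (aseq m : ℤ) ≤ |bsdVal b| := by
  obtain ⟨hbsd, hna, htop⟩ := hb
  match m, b, hbsd, hna, htop with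
  | 0, _, _, _, _ => simp [aseq]
  | 1, b, hbsd, _, htop =>
    have h₀ : b 0 ≠ 0 := htop one_pos
    rw [show bsdVal b = b 0 by simp [bsdVal], le_abs, show aseq 1 = 1 from rfl]
    omega
  | s + 2, b, hbsd, hna, htop =>
    replace hna : NonAdj b := hna
    have htop' : b (Fin.last (s + 1)) ≠ 0 := htop (by omega)
    have hr := abs_lt.mp (hna.init.init.abs_bsdVal_lt hbsd.init.init)
    have hsum : (aseq (s + 1) + aseq (s + 2) : ℤ) = 2 ^ (s + 1) + 1 := by
      exact_mod_cast aseq_add_aseq_succ (t := s + 1) (by omega)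
    rw [hna.bsdVal_eq htop', le_abs]
    obtain h | h : b (Fin.last (s + 1)) = -1 ∨ b (Fin.last (s + 1)) = 1 := by
      have := hbsd.natAbs_le_one (Fin.last (s + 1)); omega
    · right; rw [h]; linarith [hr.1, hr.2]
    · left; rw [h]; linarith [hr.1, hr.2]

lemma IsReducedNAF.nafLen_eq {n : ℕ} {b : Fin m → ℤ} (hb : IsReducedNAF b)
    (hv : bsdVal b = n) : nafLen n = m := by
  obtain ⟨c, hc, hcv⟩ : HasNAFLen n (nafLen n) :=
    Nat.sInf_mem (s := {k | HasNAFLen n k}) ⟨m, b, hb, hv⟩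
  have bounds : ∀ {k} {e : Fin k → ℤ}, IsReducedNAF e → bsdVal e = n →
      aseq k ≤ n ∧ n < aseq (k + 1) := fun he hev => by
    have h₁ := he.aseq_le_abs_bsdVal
    have h₂ := he.nonAdj.abs_bsdVal_lt he.1
    rw [hev, Int.abs_natCast] at h₁ h₂
    exact ⟨by exact_mod_cast h₁, by exact_mod_cast h₂⟩
  have key : ∀ {i j}, aseq i ≤ n → n < aseq (j + 1) → i ≤ j := fun h₁ h₂ =>
    Nat.lt_succ_iff.mp (aseq_strictMono.lt_iff_lt.mp (h₁.trans_lt h₂))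
  obtain ⟨h₁, h₂⟩ := bounds hc hcv
  obtain ⟨h₃, h₄⟩ := bounds hb hv
  exact le_antisymm (key h₁ h₄) (key h₃ h₂)

lemma IsReducedNAF.length_lt {v j : ℕ} {b : Fin m → ℤ} (hb : IsReducedNAF b)
    (hv : bsdVal b = v) (hvj : v < aseq j) : m < j := by
  have h := hb.aseq_le_abs_bsdVal
  rw [hv, Int.abs_natCast] at h
  exact aseq_strictMono.lt_iff_lt.mp ((Nat.cast_le.mp h).trans_lt hvj)

lemma IsReducedNAF.cons {d : ℤ} {b : Fin (m + 1) → ℤ} (hb : IsReducedNAF b)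
    (hd : d.natAbs ≤ 1) (hadj : d = 0 ∨ b 0 = 0) :
    IsReducedNAF (Fin.cons d b : Fin (m + 2) → ℤ) := by
  obtain ⟨hbsd, hna, htop⟩ := hb
  refine ⟨isBSDDigits_cons hd hbsd, fun j hj => ?_, fun _ => htop m.succ_pos⟩
  cases j using Fin.cases with
  | zero => exact hadj
  | succ i => exact hna i (by simpa using hj)

lemma exists_isReducedNAF_optWeight (v : ℕ) :
    ∃ k, ∃ b : Fin k → ℤ, IsReducedNAF b ∧ bsdVal b = v ∧
      bsdWeight b = optWeight v := by
  induction v using Nat.strong_induction_on with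
  | _ v ih =>
    have double : ∀ t, 0 < t → t < v → ∃ k, ∃ c : Fin (k + 2) → ℤ,
        IsReducedNAF c ∧ c 0 = 0 ∧ bsdVal c = 2 * t ∧ bsdWeight c = optWeight t := by
      intro t ht htv
      obtain ⟨_ | k, c, hc, hcv, hcw⟩ := ih t htv
      · rw [show bsdVal c = 0 by simp [bsdVal]] at hcv; omega
      exact ⟨k, Fin.cons 0 c, hc.cons (by simp) (Or.inl rfl), rfl,
        by rw [bsdVal_cons, hcv]; ring, by rw [bsdWeight_cons, hcw]; simp⟩
    rcases Nat.lt_or_ge v 2 with hv | hv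
    · interval_cases v
      · exact ⟨0, ![], ⟨fun j => j.elim0, fun j => j.elim0, fun h => absurd h (lt_irrefl 0)⟩,
          by simp [bsdVal], by simp [bsdWeight, optWeight_zero]⟩
      · exact ⟨1, ![1], ⟨fun _ => by simp, fun j h => by omega, fun _ => by simp⟩,
          by simp [bsdVal], by simp [bsdWeight, optWeight_one]⟩
    obtain ⟨t, rfl⟩ | ⟨s, rfl⟩ | ⟨s, rfl⟩ :
        (∃ t, v = 2 * t) ∨ (∃ s, v = 4 * s + 1) ∨ ∃ s, v = 4 * s + 3 := by
      rcases (by omega : v % 2 = 0 ∨ v % 4 = 1 ∨ v % 4 = 3) with h | h | h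
      exacts [.inl ⟨v / 2, by omega⟩, .inr (.inl ⟨v / 4, by omega⟩),
        .inr (.inr ⟨v / 4, by omega⟩)]
    · obtain ⟨k, c, hc, -, hcv, hcw⟩ := double t (by omega) (by omega)
      exact ⟨k + 2, c, hc, by push_cast; exact hcv, by push_cast; rw [hcw, optWeight_two_mul]⟩
    · obtain ⟨k, c, hc, hc₀, hcv, hcw⟩ := double s (by omega) (by omega)
      refine ⟨k + 3, Fin.cons 1 c, hc.cons (by simp) (Or.inr hc₀), ?_, ?_⟩
      · rw [bsdVal_cons, hcv]; push_cast; ring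
      · rw [bsdWeight_cons, hcw]; push_cast
        rw [optWeight_four_mul_add_one]; simp [add_comm]
    · obtain ⟨k, c, hc, hc₀, hcv, hcw⟩ := double (s + 1) (by omega) (by omega)
      refine ⟨k + 3, Fin.cons (-1) c, hc.cons (by simp) (Or.inr hc₀), ?_, ?_⟩
      · rw [bsdVal_cons, hcv]; push_cast; ring
      · rw [bsdWeight_cons, hcw]; push_cast
        rw [optWeight_four_mul_add_three]; simp [add_comm]

lemma exists_nonAdj_zero_pad {ℓ : ℕ} {b : Fin ℓ → ℤ} (hb : IsBSDDigits b) (hna : NonAdj b)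
    (k : ℕ) : ∃ c : Fin (ℓ + k) → ℤ, IsBSDDigits c ∧ NonAdj c ∧
      bsdVal c = bsdVal b ∧ bsdWeight c = bsdWeight b := by
  induction k with
  | zero => exact ⟨b, hb, hna, rfl, rfl⟩
  | succ k ih =>
    obtain ⟨c, hc, hcna, hcv, hcw⟩ := ih
    exact ⟨Fin.snoc c 0, isBSDDigits_snoc (by simp) hc, hcna.snoc (Or.inl rfl),
      by rw [bsdVal_snoc, hcv]; ring, by rw [bsdWeight_snoc, hcw]; simp⟩

lemma exists_isReducedNAF_two_pow_add {ℓ : ℕ} {b : Fin ℓ → ℤ} (hb : IsBSDDigits b)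
    (hna : NonAdj b) (hℓ : ℓ < m) : ∃ c : Fin (m + 1) → ℤ, IsReducedNAF c ∧
      bsdVal c = 2 ^ m + bsdVal b ∧ bsdWeight c = bsdWeight b + 1 := by
  obtain ⟨k, rfl⟩ : ∃ k, m = ℓ + k + 1 := ⟨m - ℓ - 1, by omega⟩
  obtain ⟨c, hc, hcna, hcv, hcw⟩ := exists_nonAdj_zero_pad hb hna k
  refine ⟨Fin.snoc (Fin.snoc c 0) 1,
    ⟨isBSDDigits_snoc (by simp) (isBSDDigits_snoc (by simp) hc), ?_, fun _ => ?_⟩, ?_, ?_⟩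
  · exact (hcna.snoc (Or.inl rfl)).snoc (Or.inr fun _ => by simp [snoc_apply_mk])
  · simp [snoc_apply_mk]
  · rw [bsdVal_snoc, bsdVal_snoc, hcv]; ring
  · rw [bsdWeight_snoc, bsdWeight_snoc, hcw]; simp

end NonAdjacentForms

def bsdReps (L : ℕ) (n : ℤ) (w : ℕ) : Set (Fin L → ℤ) :=
  {b | IsBSDDigits b ∧ bsdVal b = n ∧ bsdWeight b = w}

section Counting

variable {m : ℕ}

lemma Mfun_eq_ncard_bsdReps (n : ℕ) : Mfun n = (bsdReps (nafLen n) n (minWeight n)).ncard := by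
  simp only [Mfun, bsdReps, ncard_ne_zero_eq_bsdWeight]

lemma minWeight_eq_optWeight {n : ℕ} {c : Fin (nafLen n) → ℤ} (hc : IsBSDDigits c)
    (hv : bsdVal c = n) (hw : bsdWeight c = optWeight n) : minWeight n = optWeight n := by
  refine le_antisymm (Nat.sInf_le ⟨c, hc, hv, by rw [ncard_ne_zero_eq_bsdWeight, hw]⟩) ?_
  obtain ⟨b, hb, hbv, hbw⟩ := Nat.sInf_mem (s := {w : ℕ | ∃ b : Fin (nafLen n) → ℤ,
    IsBSDDigits b ∧ bsdVal b = (n : ℤ) ∧ {j | b j ≠ 0}.ncard = w}) ⟨_, c, hc, hv, rfl⟩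
  rw [ncard_ne_zero_eq_bsdWeight] at hbw
  exact hbv ▸ optWeight_le ⟨b, hb, rfl, hbw⟩

lemma Mfun_eq_ncard_of_isReducedNAF {n : ℕ} {c : Fin m → ℤ} (hc : IsReducedNAF c)
    (hv : bsdVal c = n) (hw : bsdWeight c = optWeight n) :
    Mfun n = (bsdReps m n (optWeight n)).ncard := by
  obtain rfl := hc.nafLen_eq hv
  rw [Mfun_eq_ncard_bsdReps, minWeight_eq_optWeight hc.1 hv hw]

lemma ncard_bsdReps_neg (L : ℕ) (n : ℤ) (w : ℕ) :
    (bsdReps L (-n) w).ncard = (bsdReps L n w).ncard := by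
  have : bsdReps L (-n) w = Neg.neg '' bsdReps L n w := by
    ext b
    refine ⟨fun ⟨hb, hv, hw⟩ => ⟨-b, ⟨hb.neg, ?_, ?_⟩, neg_neg b⟩, ?_⟩
    · rw [bsdVal_neg, hv, neg_neg]
    · rw [bsdWeight_neg, hw]
    · rintro ⟨a, ⟨ha, rfl, rfl⟩, rfl⟩
      exact ⟨ha.neg, bsdVal_neg a, bsdWeight_neg a⟩
  rw [this, Set.ncard_image_of_injective _ neg_injective]

lemma ncard_bsdReps_succ {n d : ℤ} {w e : ℕ} (hd : d.natAbs ≤ 1)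
    (he : e = if d = 0 then 0 else 1)
    (hlast : ∀ b ∈ bsdReps (m + 1) n (w + e), b (Fin.last m) = d) :
    (bsdReps (m + 1) n (w + e)).ncard = (bsdReps m (n - d * 2 ^ m) w).ncard := by
  have : bsdReps (m + 1) n (w + e) =
      (fun b => Fin.snoc b d) '' bsdReps m (n - d * 2 ^ m) w := by
    ext b
    refine ⟨fun hb => ⟨Fin.init b, ⟨hb.1.init, ?_, ?_⟩, ?_⟩, ?_⟩
    · have := bsdVal_eq_init_add_last b
      rw [hlast b hb] at this
      linarith [hb.2.1]
    · have := bsdWeight_eq_init_add_last b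
      rw [hlast b hb, ← he, hb.2.2] at this
      omega
    · exact (hlast b hb ▸ Fin.snoc_init_self b :)
    · rintro ⟨a, ⟨ha, hav, haw⟩, rfl⟩
      refine ⟨isBSDDigits_snoc hd ha, ?_, ?_⟩
      · rw [bsdVal_snoc, hav]; ring
      · rw [bsdWeight_snoc, haw, he]
  rw [this, Set.ncard_image_of_injective _ fun a b h => by simpa using congrArg Fin.init h]

lemma last_eq_one_of_two_pow_le {b : Fin (m + 1) → ℤ} (hb : IsBSDDigits b)
    (hv : 2 ^ m ≤ bsdVal b) : b (Fin.last m) = 1 := by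
  have hinit := abs_le.mp (abs_bsdVal_le hb.init)
  rw [bsdVal_eq_init_add_last] at hv
  obtain h | h | h := hb.eq_neg_one_or_eq_zero_or_eq_one (Fin.last m)
  all_goals rw [h] at hv
  · linarith
  · linarith
  · exact h

lemma last_eq_zero_of_bsdWeight_eq_optWeight {b : Fin (m + 1) → ℤ} (hb : IsBSDDigits b)
    (hw : bsdWeight b = optWeight (bsdVal b)) (hx : 3 * (bsdVal b).natAbs < 2 ^ m) :
    b (Fin.last m) = 0 := by
  have hle := optWeight_le ⟨Fin.init b, hb.init, rfl, rfl⟩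
  have hval := bsdVal_eq_init_add_last b
  have hwt := bsdWeight_eq_init_add_last b
  obtain h | h | h := hb.eq_neg_one_or_eq_zero_or_eq_one (Fin.last m)
  · rw [h] at hval hwt
    rw [show bsdVal (Fin.init b) = bsdVal b + 2 ^ m by linarith, add_comm,
      optWeight_two_pow_add m _ hx] at hle
    simp only [neg_eq_zero, one_ne_zero, if_false] at hwt; omega
  · exact h
  · rw [h] at hval hwt
    rw [show bsdVal (Fin.init b) = bsdVal b - 2 ^ m by linarith,
      optWeight_sub_two_pow m _ hx] at hle
    simp only [one_ne_zero, if_false] at hwt; omega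

lemma last_eq_one_of_bsdVal_eq_two_pow_succ_add {b : Fin (m + 2) → ℤ} (hb : IsBSDDigits b)
    {x : ℤ} (hv : bsdVal b = 2 ^ (m + 1) + x) (hw : bsdWeight b = optWeight x + 1)
    (hx : 3 * x.natAbs < 2 ^ m) : b (Fin.last (m + 1)) = 1 := by
  have hcast : ((2 ^ m : ℕ) : ℤ) = 2 ^ m := by norm_cast
  have hpow : (2 : ℤ) ^ (m + 1) = 2 * 2 ^ m := pow_succ' 2 m
  have hinit := abs_le.mp (abs_bsdVal_le hb.init)
  have hval := bsdVal_eq_init_add_last b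
  have hwt := bsdWeight_eq_init_add_last b
  obtain h | h | h := hb.eq_neg_one_or_eq_zero_or_eq_one (Fin.last (m + 1))
  · rw [h] at hval; omega
  · exfalso
    rw [h] at hval hwt
    simp only [zero_mul, add_zero, if_true] at hval hwt
    have h₁ := last_eq_one_of_two_pow_le hb.init (by omega)
    have hval₁ := bsdVal_eq_init_add_last (Fin.init b)
    have hwt₁ := bsdWeight_eq_init_add_last (Fin.init b)
    rw [h₁] at hval₁ hwt₁
    have hle := optWeight_le ⟨Fin.init (Fin.init b), hb.init.init, rfl, rfl⟩
    rw [show bsdVal (Fin.init (Fin.init b)) = 2 ^ m + x by linarith,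
      optWeight_two_pow_add m x hx] at hle
    simp only [one_ne_zero, if_false] at hwt₁; omega
  · exact h

lemma ncard_bsdReps_two_pow_add {x : ℤ} (hx : 0 ≤ x) (w : ℕ) :
    (bsdReps (m + 1) (2 ^ m + x) (w + 1)).ncard = (bsdReps m x w).ncard := by
  rw [ncard_bsdReps_succ (d := 1) (by simp) (by simp)
    fun b hb => last_eq_one_of_two_pow_le hb.1 (by linarith [hb.2.1]),
    show (2 : ℤ) ^ m + x - 1 * 2 ^ m = x by ring]

lemma ncard_bsdReps_two_pow_succ_add {x : ℤ} (hx : 3 * x.natAbs < 2 ^ m) :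
    (bsdReps (m + 2) (2 ^ (m + 1) + x) (optWeight x + 1)).ncard =
      (bsdReps m x (optWeight x)).ncard := by
  rw [ncard_bsdReps_succ (d := 1) (by simp) (by simp)
    fun b hb => last_eq_one_of_bsdVal_eq_two_pow_succ_add hb.1 hb.2.1 hb.2.2 hx,
    show (2 : ℤ) ^ (m + 1) + x - 1 * 2 ^ (m + 1) = x by ring]
  have := ncard_bsdReps_succ (m := m) (n := x) (w := optWeight x) (d := 0) (e := 0)
    (by simp) (by simp)
    fun b hb => last_eq_zero_of_bsdWeight_eq_optWeight hb.1 (by rw [hb.2.1, hb.2.2, add_zero])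
      (by rw [hb.2.1]; exact hx)
  simpa using this

end Counting

lemma Mfun_eq_ncard_of_two_pow_add {m j n : ℕ} {x : ℤ} (hx : x.natAbs < aseq m) (hj : m ≤ j)
    (hn : (n : ℤ) = 2 ^ j + x) :
    Mfun n = (bsdReps (j + 1) (2 ^ j + x) (optWeight x + 1)).ncard := by
  obtain ⟨ℓ, b, hb, hbv, hbw⟩ := exists_isReducedNAF_optWeight x.natAbs
  obtain ⟨b', hb', hna', hb'v, hb'w⟩ :
      ∃ b' : Fin ℓ → ℤ, IsBSDDigits b' ∧ NonAdj b' ∧ bsdVal b' = x ∧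
        bsdWeight b' = optWeight x := by
    rcases Int.natAbs_eq x with h | h
    · exact ⟨b, hb.1, hb.nonAdj, hbv.trans h.symm, hbw.trans (optWeight_natAbs x)⟩
    · exact ⟨-b, hb.1.neg, hb.nonAdj.neg, by rw [bsdVal_neg, hbv, ← h],
        by rw [bsdWeight_neg, hbw, optWeight_natAbs]⟩
  obtain ⟨c, hc, hcv, hcw⟩ :=
    exists_isReducedNAF_two_pow_add hb' hna' ((hb.length_lt hbv hx).trans_le hj)
  have h3 : 3 * x.natAbs < 2 ^ j :=
    (three_mul_lt_two_pow_of_lt_aseq hx).trans_le (Nat.pow_le_pow_right two_pos hj)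
  have hopt : optWeight n = optWeight x + 1 := by rw [hn, optWeight_two_pow_add j x h3]
  rw [Mfun_eq_ncard_of_isReducedNAF hc (by rw [hcv, hb'v, hn]) (by rw [hcw, hb'w, hopt]), hopt,
    hn]

theorem Mfun_two_pow_succ_sub_eq_and_Mfun_two_pow_succ_add_eq {m v : ℕ} (hv : v < aseq m) :
    Mfun (2 ^ (m + 1) - v) = Mfun (2 ^ m + v) ∧ Mfun (2 ^ (m + 1) + v) = Mfun (2 ^ m + v) := by
  have h3 := three_mul_lt_two_pow_of_lt_aseq hv
  have hvm : v ≤ 2 ^ (m + 1) := by rw [pow_succ]; omega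
  have e₁ : Mfun (2 ^ m + v) = _ :=
    Mfun_eq_ncard_of_two_pow_add (x := v) (by simpa) le_rfl (by push_cast; ring)
  have e₂ : Mfun (2 ^ (m + 1) + v) = _ :=
    Mfun_eq_ncard_of_two_pow_add (x := v) (j := m + 1) (by simpa) (by omega) (by push_cast; ring)
  have e₃ : Mfun (2 ^ (m + 1) - v) = _ :=
    Mfun_eq_ncard_of_two_pow_add (x := -v) (j := m + 1) (by simpa) (by omega)
      (by push_cast [Nat.cast_sub hvm]; ring)
  have c₁ := ncard_bsdReps_two_pow_add (m := m) (Int.natCast_nonneg v) (optWeight v)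
  have c₂ := ncard_bsdReps_two_pow_succ_add (m := m) (x := v) (by simpa)
  have c₃ := ncard_bsdReps_two_pow_succ_add (m := m) (x := -v) (by simpa)
  rw [optWeight_neg, ncard_bsdReps_neg] at c₃
  rw [e₁, e₂, e₃, optWeight_neg, c₁]
  exact ⟨c₃, c₂⟩

theorem num_opt_recursion_B (k u : ℕ) (hk : 3 ≤ k)
    (hu : u ≤ 2 ^ (k - 1) - (2 ^ (k - 1) - aseq (k - 2) + 1)) :
    Mfun (2 ^ (k - 1) - aseq (k - 2) + 1 + u)
      = Mfun (2 ^ (k - 1) - (aseq (k - 1) + u)) ∧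
    Mfun (2 ^ k - (2 ^ (k - 1) - aseq (k - 2) + 1 + u))
      = Mfun (2 ^ (k - 1) - (aseq (k - 1) + u)) := by
  obtain ⟨m, rfl⟩ : ∃ m, k = m + 3 := ⟨k - 3, by omega⟩
  simp only [show m + 3 - 1 = m + 2 by omega, show m + 3 - 2 = m + 1 by omega] at hu ⊢
  have h3 := three_mul_aseq (t := m + 1) (by omega)
  have hsum := aseq_add_aseq_succ (t := m + 1) (by omega)
  have hpow₁ : 2 ^ (m + 2) = 2 * 2 ^ (m + 1) := pow_succ' 2 (m + 1)
  have hpow₂ : 2 ^ (m + 3) = 2 * 2 ^ (m + 2) := pow_succ' 2 (m + 2)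
  obtain ⟨h₁, h₂⟩ := Mfun_two_pow_succ_sub_eq_and_Mfun_two_pow_succ_add_eq
    (m := m + 1) (v := aseq (m + 1) - 1 - u) (by omega)
  rw [show m + 1 + 1 = m + 2 from rfl] at h₁ h₂ hsum
  convert And.intro h₁ h₂ using 2 <;> congr 1 <;> omega
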